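/- Let m, n ≥ 1, let O ⊆ ℝᵐ be open, and let u : ℝᵐ → ℂⁿ be three times continuously differentiable on O with invertible Gram matrix g(t) (entries g_{ij}(t) = ⟨∂_i u(t), ∂_j u(t)⟩) at every t ∈ O; write s = √(det g), g^{ij} for the entries of g⁻¹, and H := Δ_g u := s⁻¹ Σ_{i,j} ∂_j( s · g^{ij} · ∂_i u ). Let θ : O → ℝ be continuously differentiable and satisfy ∂_i θ(t) = ⟨J H(t), ∂_i u(t)⟩ for all t ∈ O and all i. If the Hamiltonian stationary condition Σ_{i,j} g^{ij} ⟨∂_j (J H), ∂_i u⟩ = 0 holds on O, then θ is harmonic with respect to g: Σ_{i,j} ∂_j( s · g^{ij} · ∂_i θ ) = 0 on O. -/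

import Mathlib

/-- The standard complex structure `J x = i • x` on `ℂⁿ`. -/
noncomputable def Jc {n : ℕ} (x : EuclideanSpace ℂ (Fin n)) : EuclideanSpace ℂ (Fin n) :=
  Complex.I • x

/-- The real inner product `⟨x, y⟩ = Re ⟪x, y⟫` on `ℂⁿ`. -/
noncomputable def rinner {n : ℕ} (x y : EuclideanSpace ℂ (Fin n)) : ℝ :=
  (inner ℂ x y : ℂ).re

/-- Partial derivative in the `k`-th coordinate direction of a map on `ℝᵐ`. -/
noncomputable def pd {m : ℕ} {E : Type*} [NormedAddCommGroup E] [NormedSpace ℝ E]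
    (k : Fin m) (f : EuclideanSpace ℝ (Fin m) → E) (t : EuclideanSpace ℝ (Fin m)) : E :=
  fderiv ℝ f t (EuclideanSpace.single k 1)

/-- The Gram matrix `g_{ij} = ⟨∂_i u, ∂_j u⟩` of an immersion `u : ℝᵐ → ℂⁿ`. -/
noncomputable def gram {m n : ℕ} (u : EuclideanSpace ℝ (Fin m) → EuclideanSpace ℂ (Fin n))
    (t : EuclideanSpace ℝ (Fin m)) : Matrix (Fin m) (Fin m) ℝ :=
  fun i j => rinner (pd i u t) (pd j u t)

/-!
By the product rule, `∂_j (s g^{ij} ∂_i θ) = ∂_j ⟨JH, s g^{ij} ∂_i u⟩` splits into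
`s g^{ij} ⟨∂_j (JH), ∂_i u⟩`, which sums to `s` times the Hamiltonian stationary expression, and
`⟨JH, ∂_j (s g^{ij} ∂_i u)⟩`, which sums to `⟨JH, s H⟩ = 0` because `J` is skew.
The product rule needs `H` to be differentiable: since a Gram matrix is positive semidefinite,
invertibility makes `det g > 0`, so `s = √(det g)` and `g⁻¹` are `C²` along with `∂_i u`,
and `H` is `C¹`.
-/

open Filter Topology

section RealInner

variable {n : ℕ}

lemma rinner_smul_right (x y : EuclideanSpace ℂ (Fin n)) (c : ℝ) :
    rinner x (c • y) = c * rinner x y := by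
  simp [rinner]

lemma rinner_sum_right {ι : Type*} (s : Finset ι) (x : EuclideanSpace ℂ (Fin n))
    (f : ι → EuclideanSpace ℂ (Fin n)) :
    rinner x (∑ i ∈ s, f i) = ∑ i ∈ s, rinner x (f i) := by
  simp [rinner]

lemma rinner_Jc_self (x : EuclideanSpace ℂ (Fin n)) : rinner (Jc x) x = 0 := by
  rw [rinner, ← inner_conj_symm, Complex.conj_re]
  exact real_inner_I_smul_self ℂ x

lemma ContDiffOn.rinner {E : Type*} [NormedAddCommGroup E] [NormedSpace ℝ E]
    {f g : E → EuclideanSpace ℂ (Fin n)} {s : Set E} {k : WithTop ℕ∞}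
    (hf : ContDiffOn ℝ k f s) (hg : ContDiffOn ℝ k g s) :
    ContDiffOn ℝ k (fun x => rinner (f x) (g x)) s :=
  Complex.reCLM.contDiff.comp_contDiffOn (hf.inner ℂ hg)

end RealInner

section PartialDerivative

variable {m : ℕ} {E : Type*} [NormedAddCommGroup E] [NormedSpace ℝ E]

lemma Filter.EventuallyEq.pd_eq {f g : EuclideanSpace ℝ (Fin m) → E}
    {t : EuclideanSpace ℝ (Fin m)} (h : f =ᶠ[𝓝 t] g) (k : Fin m) : pd k f t = pd k g t := by
  rw [pd, pd, h.fderiv_eq]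

lemma pd_rinner {n : ℕ} {f g : EuclideanSpace ℝ (Fin m) → EuclideanSpace ℂ (Fin n)}
    {t : EuclideanSpace ℝ (Fin m)} (k : Fin m)
    (hf : DifferentiableAt ℝ f t) (hg : DifferentiableAt ℝ g t) :
    pd k (fun x => rinner (f x) (g x)) t = rinner (pd k f t) (g t) + rinner (f t) (pd k g t) := by
  have h : HasFDerivAt (fun x => rinner (f x) (g x)) _ t :=
    Complex.reCLM.hasFDerivAt.comp t (hf.hasFDerivAt.inner ℂ hg.hasFDerivAt)
  rw [pd, h.fderiv]
  simp only [ContinuousLinearMap.comp_apply, ContinuousLinearMap.prod_apply, fderivInnerCLM_apply,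
    Complex.reCLM_apply, Complex.add_re, rinner, pd]
  ring

lemma ContDiffOn.pd {f : EuclideanSpace ℝ (Fin m) → E} {O : Set (EuclideanSpace ℝ (Fin m))}
    {k N : WithTop ℕ∞} (hf : ContDiffOn ℝ N f O) (hO : IsOpen O) (hk : k + 1 ≤ N) (i : Fin m) :
    ContDiffOn ℝ k (pd i f) O :=
  (hf.fderiv_of_isOpen hO hk).clm_apply contDiffOn_const

end PartialDerivative

section MatrixSmoothness

variable {𝕜 E ι : Type*} [NontriviallyNormedField 𝕜] [NormedAddCommGroup E] [NormedSpace 𝕜 E]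
  [Fintype ι] [DecidableEq ι] {M : E → Matrix ι ι 𝕜} {s : Set E} {k : WithTop ℕ∞}

lemma contDiffOn_det (h : ∀ i j, ContDiffOn 𝕜 k (fun t => M t i j) s) :
    ContDiffOn 𝕜 k (fun t => (M t).det) s := by
  simp only [Matrix.det_apply']
  exact ContDiffOn.sum fun σ _ =>
    contDiffOn_const.mul (contDiffOn_prod fun i _ => h _ _)

lemma contDiffOn_adjugate_apply (h : ∀ i j, ContDiffOn 𝕜 k (fun t => M t i j) s) (i j : ι) :
    ContDiffOn 𝕜 k (fun t => (M t).adjugate i j) s := by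
  simp only [Matrix.adjugate_apply]
  refine contDiffOn_det fun a b => ?_
  simp only [Matrix.updateRow_apply]
  split_ifs
  · exact contDiffOn_const
  · exact h a b

lemma contDiffOn_inv_apply (h : ∀ i j, ContDiffOn 𝕜 k (fun t => M t i j) s)
    (hdet : ∀ t ∈ s, (M t).det ≠ 0) (i j : ι) :
    ContDiffOn 𝕜 k (fun t => (M t)⁻¹ i j) s := by
  simp only [Matrix.inv_def, Matrix.smul_apply, Ring.inverse_eq_inv', smul_eq_mul]
  exact ((contDiffOn_det h).inv hdet).mul (contDiffOn_adjugate_apply h i j)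

end MatrixSmoothness

section Gram

variable {m n : ℕ} {u : EuclideanSpace ℝ (Fin m) → EuclideanSpace ℂ (Fin n)}

lemma posSemidef_gram (u : EuclideanSpace ℝ (Fin m) → EuclideanSpace ℂ (Fin n))
    (t : EuclideanSpace ℝ (Fin m)) : (gram u t).PosSemidef := by
  let := InnerProductSpace.rclikeToReal ℂ (EuclideanSpace ℂ (Fin n))
  exact Matrix.posSemidef_gram ℝ (fun i => pd i u t)

lemma det_gram_pos {t : EuclideanSpace ℝ (Fin m)} (h : IsUnit (gram u t)) :
    0 < (gram u t).det :=
  ((posSemidef_gram u t).posDef_iff_isUnit.2 h).det_pos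

variable {O : Set (EuclideanSpace ℝ (Fin m))} {k : WithTop ℕ∞}

lemma contDiffOn_gram_apply (hO : IsOpen O) (hu : ContDiffOn ℝ (k + 1) u O) (i j : Fin m) :
    ContDiffOn ℝ k (fun t => gram u t i j) O :=
  (hu.pd hO le_rfl i).rinner (hu.pd hO le_rfl j)

lemma contDiffOn_sqrt_det_gram (hO : IsOpen O) (hu : ContDiffOn ℝ (k + 1) u O)
    (hg : ∀ t ∈ O, IsUnit (gram u t)) :
    ContDiffOn ℝ k (fun t => √(gram u t).det) O :=
  (contDiffOn_det (contDiffOn_gram_apply hO hu)).sqrt fun t ht => (det_gram_pos (hg t ht)).ne'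

lemma contDiffOn_gram_inv_apply (hO : IsOpen O) (hu : ContDiffOn ℝ (k + 1) u O)
    (hg : ∀ t ∈ O, IsUnit (gram u t)) (i j : Fin m) :
    ContDiffOn ℝ k (fun t => (gram u t)⁻¹ i j) O :=
  contDiffOn_inv_apply (contDiffOn_gram_apply hO hu)
    (fun t ht => (det_gram_pos (hg t ht)).ne') i j

end Gram

lemma sum_pd_rinner {m n : ℕ} {A : EuclideanSpace ℝ (Fin m) → EuclideanSpace ℂ (Fin n)}
    {X : Fin m → Fin m → EuclideanSpace ℝ (Fin m) → EuclideanSpace ℂ (Fin n)}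
    {t : EuclideanSpace ℝ (Fin m)} (hA : DifferentiableAt ℝ A t)
    (hX : ∀ i j, DifferentiableAt ℝ (X i j) t) :
    ∑ i, ∑ j, pd j (fun x => rinner (A x) (X i j x)) t
      = ∑ i, ∑ j, rinner (pd j A t) (X i j t) + rinner (A t) (∑ i, ∑ j, pd j (X i j) t) := by
  simp only [pd_rinner _ hA (hX _ _), Finset.sum_add_distrib, rinner_sum_right]

theorem harmonicity_of_theta_general (m n : ℕ)
    (O : Set (EuclideanSpace ℝ (Fin m))) (hO : IsOpen O)
    (u : EuclideanSpace ℝ (Fin m) → EuclideanSpace ℂ (Fin n))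
    (hu : ContDiffOn ℝ 3 u O)
    (hg : ∀ t ∈ O, IsUnit (gram u t))
    (s : EuclideanSpace ℝ (Fin m) → ℝ) (hs : ∀ t, s t = Real.sqrt (gram u t).det)
    (ginv : EuclideanSpace ℝ (Fin m) → Matrix (Fin m) (Fin m) ℝ)
    (hginv : ∀ t, ginv t = (gram u t)⁻¹)
    (H : EuclideanSpace ℝ (Fin m) → EuclideanSpace ℂ (Fin n))
    (hH : ∀ t, H t = (s t)⁻¹ •
      ∑ i : Fin m, ∑ j : Fin m, pd j (fun t => (s t * ginv t i j) • pd i u t) t)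
    (θ : EuclideanSpace ℝ (Fin m) → ℝ)
    (hdθ : ∀ t ∈ O, ∀ i : Fin m, pd i θ t = rinner (Jc (H t)) (pd i u t))
    (hHS : ∀ t ∈ O,
      (∑ i : Fin m, ∑ j : Fin m,
        ginv t i j * rinner (pd j (fun t => Jc (H t)) t) (pd i u t)) = 0) :
    ∀ t ∈ O,
      (∑ i : Fin m, ∑ j : Fin m, pd j (fun t => s t * ginv t i j * pd i θ t) t) = 0 := by
  have hs2 : ContDiffOn ℝ 2 s O := funext hs ▸ contDiffOn_sqrt_det_gram hO hu hg
  have hs0 : ∀ t ∈ O, s t ≠ 0 := fun t ht =>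
    hs t ▸ (Real.sqrt_pos.2 (det_gram_pos (hg t ht))).ne'
  have hX : ∀ i j, ContDiffOn ℝ 2 (fun t => (s t * ginv t i j) • pd i u t) O := fun i j =>
    (hs2.mul (funext hginv ▸ contDiffOn_gram_inv_apply hO hu hg i j)).smul (hu.pd hO le_rfl i)
  have hH1 : ContDiffOn ℝ 1 H O := funext hH ▸ ((hs2.of_le one_le_two).inv hs0).smul
    (ContDiffOn.sum fun i _ => ContDiffOn.sum fun j _ => (hX i j).pd hO le_rfl j)
  intro t ht
  have hdiff {F : _ → EuclideanSpace ℂ (Fin n)} {k : WithTop ℕ∞} (hF : ContDiffOn ℝ k F O)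
      (hk : k ≠ 0) : DifferentiableAt ℝ F t :=
    (hF.differentiableOn hk).differentiableAt (hO.mem_nhds ht)
  have hθ i j : (fun x => s x * ginv x i j * pd i θ x)
      =ᶠ[𝓝 t] fun x => rinner (Jc (H x)) ((s x * ginv x i j) • pd i u x) := by
    filter_upwards [hO.mem_nhds ht] with x hx
    rw [hdθ x hx i, rinner_smul_right]
  have hsH : ∑ i, ∑ j, pd j (fun x => (s x * ginv x i j) • pd i u x) t = s t • H t := by
    rw [hH t, smul_inv_smul₀ (hs0 t ht)]
  simp only [(hθ _ _).pd_eq]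
  rw [sum_pd_rinner (hdiff (F := fun x => Jc (H x)) (hH1.const_smul Complex.I) one_ne_zero)
    fun i j => hdiff (hX i j) two_ne_zero, hsH, rinner_smul_right, rinner_Jc_self, mul_zero,
    add_zero]
  simp only [rinner_smul_right, mul_assoc, ← Finset.mul_sum, hHS t ht, mul_zero]

/-- If `u : ℝᵐ → ℂⁿ` is a `C³` immersion on an open set `O` with mean curvature `H = Δ_g u`,
`θ` is a `C¹` primitive of the 1-form `⟨JH, ·⟩`, and the Hamiltonian stationary condition
`Σ_{i,j} g^{ij} ⟨∂_j (JH), ∂_i u⟩ = 0` holds on `O`, then `θ` is harmonic with respect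
to the induced metric `g`. -/
theorem harmonicity_of_theta (m n : ℕ) (hm : 1 ≤ m) (hn : 1 ≤ n)
    (O : Set (EuclideanSpace ℝ (Fin m))) (hO : IsOpen O)
    (u : EuclideanSpace ℝ (Fin m) → EuclideanSpace ℂ (Fin n))
    (hu : ContDiffOn ℝ 3 u O)
    (hg : ∀ t ∈ O, IsUnit (gram u t))
    (s : EuclideanSpace ℝ (Fin m) → ℝ) (hs : ∀ t, s t = Real.sqrt (gram u t).det)
    (ginv : EuclideanSpace ℝ (Fin m) → Matrix (Fin m) (Fin m) ℝ)
    (hginv : ∀ t, ginv t = (gram u t)⁻¹)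
    (H : EuclideanSpace ℝ (Fin m) → EuclideanSpace ℂ (Fin n))
    (hH : ∀ t, H t = (s t)⁻¹ •
      ∑ i : Fin m, ∑ j : Fin m, pd j (fun t => (s t * ginv t i j) • pd i u t) t)
    (θ : EuclideanSpace ℝ (Fin m) → ℝ) (hθ : ContDiffOn ℝ 1 θ O)
    (hdθ : ∀ t ∈ O, ∀ i : Fin m, pd i θ t = rinner (Jc (H t)) (pd i u t))
    (hHS : ∀ t ∈ O,
      (∑ i : Fin m, ∑ j : Fin m,
        ginv t i j * rinner (pd j (fun t => Jc (H t)) t) (pd i u t)) = 0) :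
    ∀ t ∈ O,
      (∑ i : Fin m, ∑ j : Fin m, pd j (fun t => s t * ginv t i j * pd i θ t) t) = 0 :=
  harmonicity_of_theta_general m n O hO u hu hg s hs ginv hginv H hH θ hdθ hHS
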